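/- arXiv:math-ph/0408039 — 3 statements merged into one kernel-verified Lean document; each statement's English description precedes it below -/
import Mathlib

section
/- Let n ≥ 1 and let x, y : Fin n → ℝ be such that the positions x i are pairwise distinct. Define the n×n real matrices X and Z by X i j = x i if i = j and 0 otherwise, and Z i j = y i if i = j and √2/(x i − x j) if i ≠ j. Then trace(Z² − X) = (∑_{i} (y i)² − x i) − ∑_{i < j} 4/(x i − x j)². That is, the Hamiltonian H of the self-dual particle system equals trace(Z² − X). -/
open Matrix

/-- The Hamiltonian `H = (∑ yᵢ² − xᵢ) − ∑_{i<j} 4/(xᵢ − xⱼ)²` of the self-dual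
particle system equals `trace(Z² − X)` for the Calogero–Moser type matrices
`X = diag(xᵢ)` and `Z` with diagonal `yᵢ` and off-diagonal `√2/(xᵢ − xⱼ)`. -/
theorem hamiltonian_as_trace (n : ℕ) (hn : 1 ≤ n) (x y : Fin n → ℝ)
    (hx : Function.Injective x)
    (X Z : Matrix (Fin n) (Fin n) ℝ)
    (hX : ∀ i j, X i j = if i = j then x i else 0)
    (hZ : ∀ i j, Z i j = if i = j then y i else Real.sqrt 2 / (x i - x j)) :
    (Z * Z - X).trace =
      (∑ i, ((y i) ^ 2 - x i)) -
        ∑ p ∈ Finset.univ.filter (fun p : Fin n × Fin n => p.1 < p.2),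
          4 / (x p.1 - x p.2) ^ 2 := by
  have h2 : Real.sqrt 2 * Real.sqrt 2 = 2 := Real.mul_self_sqrt (by norm_num)
  have key : ∀ i j : Fin n, Z i j * Z j i =
      if i = j then y i ^ 2 else -2 / (x i - x j) ^ 2 := by
    intro i j
    by_cases h : i = j
    · subst h; simp [hZ, sq]
    · rw [hZ, hZ, if_neg h, if_neg (Ne.symm h), if_neg h, div_mul_div_comm, h2]
      rw [show (x i - x j) * (x j - x i) = -((x i - x j) ^ 2) by ring, div_neg,
        neg_div]
  have htr : (Z * Z).trace =
      ∑ p : Fin n × Fin n, Z p.1 p.2 * Z p.2 p.1 := by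
    rw [← Finset.univ_product_univ, Finset.sum_product]
    simp [Matrix.trace, Matrix.mul_apply, Matrix.diag]
  -- diagonal part
  have hdiag : ∑ p ∈ Finset.univ.filter (fun p : Fin n × Fin n => p.1 = p.2),
      Z p.1 p.2 * Z p.2 p.1 = ∑ i, y i ^ 2 := by
    rw [Finset.sum_congr rfl (fun p hp => by
      simp only [Finset.mem_filter] at hp
      rw [key, if_pos hp.2])]
    refine Finset.sum_nbij' (fun p => p.1) (fun i => (i, i)) ?_ ?_ ?_ ?_ ?_
    · simp
    · simp
    · intro p hp
      simp only [Finset.mem_filter] at hp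
      exact Prod.ext rfl hp.2
    · intro i _; rfl
    · intro p _; rfl
  -- off-diagonal part
  have g_symm : ∀ p : Fin n × Fin n,
      (-2 : ℝ) / (x p.2 - x p.1) ^ 2 = -2 / (x p.1 - x p.2) ^ 2 := by
    intro p; rw [show (x p.2 - x p.1) ^ 2 = (x p.1 - x p.2) ^ 2 by ring]
  have hoff : ∑ p ∈ Finset.univ.filter (fun p : Fin n × Fin n => ¬p.1 = p.2),
      Z p.1 p.2 * Z p.2 p.1 =
      ∑ p ∈ Finset.univ.filter (fun p : Fin n × Fin n => p.1 < p.2),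
        (-4 / (x p.1 - x p.2) ^ 2) := by
    rw [Finset.sum_congr rfl (fun p hp => by
      simp only [Finset.mem_filter] at hp
      rw [key, if_neg hp.2])]
    have hset : Finset.univ.filter (fun p : Fin n × Fin n => ¬p.1 = p.2) =
        (Finset.univ.filter (fun p : Fin n × Fin n => p.1 < p.2)) ∪
        (Finset.univ.filter (fun p : Fin n × Fin n => p.2 < p.1)) := by
      ext p
      simp only [Finset.mem_filter, Finset.mem_union, Finset.mem_univ, true_and]
      constructor
      · intro h; exact (Ne.lt_or_gt h)
      · rintro (h | h)
        · exact h.ne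
        · exact h.ne'
    rw [hset, Finset.sum_union (by
      rw [Finset.disjoint_filter]
      intro p _ h1 h2
      exact absurd h1 (not_lt_of_gt h2))]
    have hswap : ∑ p ∈ Finset.univ.filter (fun p : Fin n × Fin n => p.2 < p.1),
        (-2 : ℝ) / (x p.1 - x p.2) ^ 2 =
        ∑ p ∈ Finset.univ.filter (fun p : Fin n × Fin n => p.1 < p.2),
          (-2 : ℝ) / (x p.1 - x p.2) ^ 2 := by
      refine Finset.sum_nbij' (fun p => (p.2, p.1)) (fun p => (p.2, p.1))
        ?_ ?_ ?_ ?_ ?_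
      · intro p hp; simp only [Finset.mem_filter] at hp ⊢; exact ⟨Finset.mem_univ _, hp.2⟩
      · intro p hp; simp only [Finset.mem_filter] at hp ⊢; exact ⟨Finset.mem_univ _, hp.2⟩
      · intro p _; rfl
      · intro p _; rfl
      · intro p _; exact (g_symm p).symm
    rw [hswap, ← Finset.sum_add_distrib]
    refine Finset.sum_congr rfl (fun p _ => by ring)
  have hX' : X.trace = ∑ i, x i := by
    simp [Matrix.trace, Matrix.diag, hX]
  rw [Matrix.trace_sub, htr,
    ← Finset.sum_filter_add_sum_filter_not Finset.univ
      (fun p : Fin n × Fin n => p.1 = p.2) (fun p => Z p.1 p.2 * Z p.2 p.1),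
    hdiag, hoff, hX', Finset.sum_sub_distrib]
  rw [show ∑ p ∈ Finset.univ.filter (fun p : Fin n × Fin n => p.1 < p.2),
      (-4 / (x p.1 - x p.2) ^ 2) =
      -∑ p ∈ Finset.univ.filter (fun p : Fin n × Fin n => p.1 < p.2),
      (4 / (x p.1 - x p.2) ^ 2) by
    rw [← Finset.sum_neg_distrib]
    exact Finset.sum_congr rfl (fun p _ => by ring)]
  ring
end

section
/- Let n ≥ 1 and let Ai : ℝ → ℝ be a differentiable function. Define ψ : (Fin n → ℝ) × (Fin n → ℝ) → ℝ by ψ(x, z) = exp((1/n)·∑_{i<j}(x_i − x_j)(z_i − z_j)) · Ai(n^{-1/3}·∑_i (x_i + z_i)). Then for all indices i, j and all x, z: (∂_i − ∂_j)ψ(·, z)(x) = (z_i − z_j)·ψ(x, z), where the partial derivatives are taken in the x-variables. -/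
/-- First partial derivative `∂ᵢ f` at `x`. -/
noncomputable def pderiv1 {n : ℕ} (f : (Fin n → ℝ) → ℝ) (i : Fin n)
    (x : Fin n → ℝ) : ℝ :=
  fderiv ℝ f x (Pi.single i 1)

/-- The common eigenfunction
`ψ(x,z) = exp((1/n) ∑_{i<j} (xᵢ−xⱼ)(zᵢ−zⱼ)) · Ai(n^{-1/3} ∑ᵢ (xᵢ+zᵢ))`. -/
noncomputable def psiFun (n : ℕ) (Ai : ℝ → ℝ) (x z : Fin n → ℝ) : ℝ :=
  Real.exp ((1 / (n : ℝ)) *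
      ∑ p ∈ Finset.univ.filter (fun p : Fin n × Fin n => p.1 < p.2),
        (x p.1 - x p.2) * (z p.1 - z p.2)) *
    Ai ((n : ℝ) ^ (-(1 : ℝ) / 3) * ∑ i, (x i + z i))

lemma key_sum (n : ℕ) (z : Fin n → ℝ) (i : Fin n) :
    ∑ p ∈ Finset.univ.filter (fun p : Fin n × Fin n => p.1 < p.2),
      (z p.1 - z p.2) * ((Pi.single i 1 : Fin n → ℝ) p.1 - (Pi.single i 1 : Fin n → ℝ) p.2)
    = n * z i - ∑ k, z k := by
  classical
  set f : Fin n × Fin n → ℝ :=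
    fun p => (z p.1 - z p.2) * ((Pi.single i 1 : Fin n → ℝ) p.1 - (Pi.single i 1 : Fin n → ℝ) p.2) with hf
  have hswap : ∑ p ∈ Finset.univ.filter (fun p : Fin n × Fin n => p.1 < p.2), f p
      = ∑ p ∈ Finset.univ.filter (fun p : Fin n × Fin n => p.2 < p.1), f p := by
    refine Finset.sum_nbij' Prod.swap Prod.swap ?_ ?_ ?_ ?_ ?_
    · intro p hp; simp only [Finset.mem_filter, Finset.mem_univ, true_and] at hp ⊢; exact hp
    · intro p hp; simp only [Finset.mem_filter, Finset.mem_univ, true_and] at hp ⊢; exact hp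
    · intro p _; simp
    · intro p _; simp
    · intro p _; simp only [hf, Prod.fst_swap, Prod.snd_swap]; ring
  have hnot : ∑ p ∈ Finset.univ.filter (fun p : Fin n × Fin n => ¬ p.1 < p.2), f p
      = ∑ p ∈ Finset.univ.filter (fun p : Fin n × Fin n => p.2 < p.1), f p := by
    refine (Finset.sum_subset ?_ ?_).symm
    · intro p hp; simp only [Finset.mem_filter, Finset.mem_univ, true_and] at hp ⊢
      exact not_lt_of_gt hp
    · intro p hp hnp
      simp only [Finset.mem_filter, Finset.mem_univ, true_and, not_lt] at hp hnp
      have : p.1 = p.2 := le_antisymm hnp hp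
      simp [hf, this]
  have htot : ∑ p : Fin n × Fin n, f p
      = 2 * ∑ p ∈ Finset.univ.filter (fun p : Fin n × Fin n => p.1 < p.2), f p := by
    rw [← Finset.sum_filter_add_sum_filter_not Finset.univ
      (fun p : Fin n × Fin n => p.1 < p.2) f, hnot, ← hswap]
    ring
  have hcomp : ∑ p : Fin n × Fin n, f p = 2 * (n * z i - ∑ k, z k) := by
    rw [Fintype.sum_prod_type]
    simp only [hf, Pi.single_apply]
    have : ∀ a : Fin n, ∑ b : Fin n,
        (z a - z b) * ((if a = i then (1:ℝ) else 0) - if b = i then 1 else 0)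
        = (if a = i then (n * z a - ∑ k, z k) else 0) - (z a - z i) := by
      intro a
      rw [Finset.sum_congr rfl (fun b _ => by
          by_cases h1 : a = i <;> by_cases h2 : b = i <;> simp [h1, h2] :
        ∀ b ∈ Finset.univ, (z a - z b) * ((if a = i then (1:ℝ) else 0) - if b = i then 1 else 0)
          = (if a = i then (z a - z b) else 0) - (if b = i then (z a - z b) else 0))]
      rw [Finset.sum_sub_distrib]
      congr 1
      · split
        · rw [Finset.sum_sub_distrib, Finset.sum_const]; simp
        · simp
      · simp
    rw [Finset.sum_congr rfl (fun a _ => this a), Finset.sum_sub_distrib]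
    rw [Finset.sum_ite_eq' Finset.univ i (fun a => n * z a - ∑ k, z k)]
    simp [Finset.sum_sub_distrib, Finset.sum_const]
    ring
  have := htot.symm.trans hcomp
  linarith

/-- `ψ(·,z)` is a common eigenfunction of the difference operators
`∂ᵢ − ∂ⱼ` with eigenvalues `zᵢ − zⱼ`. -/
theorem psi_diff_eigenfunction (n : ℕ) (hn : 1 ≤ n) (Ai : ℝ → ℝ)
    (hAi : Differentiable ℝ Ai) :
    ∀ i j : Fin n, ∀ x z : Fin n → ℝ,
      pderiv1 (fun y => psiFun n Ai y z) i x -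
          pderiv1 (fun y => psiFun n Ai y z) j x =
        (z i - z j) * psiFun n Ai x z := by
  intro i j x z
  classical
  have hn0 : (n : ℝ) ≠ 0 := Nat.cast_ne_zero.mpr (by omega)
  set P := Finset.univ.filter (fun p : Fin n × Fin n => p.1 < p.2) with hP
  set c : ℝ := (n : ℝ) ^ (-(1 : ℝ) / 3) with hc
  -- the two "inner" functions
  set A : (Fin n → ℝ) → ℝ := fun y => (1 / (n : ℝ)) * ∑ p ∈ P, (y p.1 - y p.2) * (z p.1 - z p.2)
    with hA
  set B : (Fin n → ℝ) → ℝ := fun y => c * ∑ k, (y k + z k) with hB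
  -- continuous linear maps giving the derivatives
  set L1 : (Fin n → ℝ) →L[ℝ] ℝ :=
    ∑ p ∈ P, ((1 / (n : ℝ)) * (z p.1 - z p.2)) •
      ((ContinuousLinearMap.proj p.1 : (Fin n → ℝ) →L[ℝ] ℝ) - ContinuousLinearMap.proj p.2)
    with hL1
  set L2 : (Fin n → ℝ) →L[ℝ] ℝ :=
    c • ∑ k, (ContinuousLinearMap.proj k : (Fin n → ℝ) →L[ℝ] ℝ) with hL2
  have hL1app : ∀ v, L1 v = ∑ p ∈ P, ((1 / (n : ℝ)) * (z p.1 - z p.2)) * (v p.1 - v p.2) := by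
    intro v
    rw [hL1]
    simp [ContinuousLinearMap.sum_apply]
  have hL2app : ∀ v, L2 v = c * ∑ k, v k := by
    intro v
    rw [hL2]
    simp [ContinuousLinearMap.sum_apply]
  have hAeq : A = fun y => L1 y := by
    funext y
    simp only [hA]
    rw [hL1app, Finset.mul_sum]
    exact Finset.sum_congr rfl fun p _ => by ring
  have hBeq : B = fun y => L2 y + c * ∑ k, z k := by
    funext y
    simp only [hB]
    rw [hL2app, Finset.sum_add_distrib, mul_add]
  have hAd : HasFDerivAt A L1 x := by
    rw [hAeq]; exact L1.hasFDerivAt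
  have hBd : HasFDerivAt B L2 x := by
    rw [hBeq]; exact L2.hasFDerivAt.add_const _
  set d : ℝ := deriv Ai (B x) with hd
  have hAid : HasFDerivAt (fun y => Ai (B y)) (d • L2) x :=
    ((hAi (B x)).hasDerivAt).comp_hasFDerivAt x hBd
  have hexp : HasFDerivAt (fun y => Real.exp (A y)) (Real.exp (A x) • L1) x := hAd.exp
  set D : (Fin n → ℝ) →L[ℝ] ℝ :=
    Real.exp (A x) • (d • L2) + Ai (B x) • (Real.exp (A x) • L1) with hD
  have hpsi : HasFDerivAt (fun y => psiFun n Ai y z) D x := by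
    have : (fun y => psiFun n Ai y z) = fun y => Real.exp (A y) * Ai (B y) := rfl
    rw [this, hD]
    exact hexp.mul hAid
  have hf : fderiv ℝ (fun y => psiFun n Ai y z) x = D := hpsi.fderiv
  have hval : ∀ k : Fin n, D (Pi.single k 1) =
      Real.exp (A x) * (d * c) + Ai (B x) * (Real.exp (A x) *
        ((1 / (n : ℝ)) * ((n : ℝ) * z k - ∑ m, z m))) := by
    intro k
    have h1 : L2 (Pi.single k 1) = c := by
      rw [hL2app]
      simp [Pi.single_apply, Finset.sum_ite_eq']
    have h2 : L1 (Pi.single k 1) = (1 / (n : ℝ)) * ((n : ℝ) * z k - ∑ m, z m) := by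
      rw [hL1app, ← key_sum n z k, Finset.mul_sum, hP]
      exact Finset.sum_congr rfl fun p _ => by ring
    rw [hD]
    simp only [ContinuousLinearMap.add_apply, ContinuousLinearMap.smul_apply, smul_eq_mul,
      h1, h2]
  have hpsival : psiFun n Ai x z = Real.exp (A x) * Ai (B x) := rfl
  rw [pderiv1, pderiv1, hf, hval i, hval j, hpsival]
  field_simp
  ring
end

section
/- Let n ≥ 1 and let Ai : ℝ → ℝ be a twice differentiable function with Ai''(t) = t·Ai(t) for all t. Define ψ(x, z) = exp((1/n)·∑_{i<j}(x_i − x_j)(z_i − z_j)) · Ai(n^{-1/3}·∑_i (x_i + z_i)). Then for all x, z: ∑_i ∂_i² ψ(·, z)(x) − (∑_i x_i)·ψ(x, z) = p_n(z)·ψ(x, z), where p_n(z) = ∑_{j} ((z_j − z̄)² + z_j) with z̄ = (1/n)∑_i z_i; equivalently p_n(z) = ∑_{j} (((1/n)∑_i (z_j − z_i))² + z_j). That is, ψ(·, z) is an eigenfunction of H = ∑ ∂_i² − ∑ x_i with eigenvalue p_n(z). -/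
/-!
The exponent is a linear form in `x`: pairing the sum over `i < j` with its mirror image gives
`(1/n) ∑_{i<j} (xᵢ - xⱼ)(zᵢ - zⱼ) = ∑ᵢ (zᵢ - z̄) xᵢ`. Hence `ψ(·, z) = exp (ℓ x) · Ai (μ x + b)` with
`ℓ, μ` linear, `ℓ eᵢ = zᵢ - z̄` and `μ eᵢ = n^{-1/3}`, and for such a product
`∂ᵢ² ψ = (ℓ eᵢ)² ψ + 2 (ℓ eᵢ) (μ eᵢ) e^ℓ Ai' + (μ eᵢ)² e^ℓ Ai''`.
Summing over `i`, the cross terms cancel because `∑ᵢ (zᵢ - z̄) = 0`, and by the Airy equation the last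
terms add up to `n · n^{-2/3} · n^{-1/3} ∑ᵢ (xᵢ + zᵢ) · ψ = (∑ᵢ xᵢ + ∑ᵢ zᵢ) · ψ`.
-/

/-- Second partial derivative `∂ᵢ² f` at `x`. -/
noncomputable def pderiv2 {n : ℕ} (f : (Fin n → ℝ) → ℝ) (i : Fin n)
    (x : Fin n → ℝ) : ℝ :=
  fderiv ℝ (fun y => fderiv ℝ f y (Pi.single i 1)) x (Pi.single i 1)

open Finset Real

section PairSums

variable {ι : Type*} [Fintype ι]

theorem two_nsmul_sum_filter_lt {M : Type*} [LinearOrder ι] [AddCommMonoid M] (G : ι → ι → M)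
    (hsymm : ∀ i j, G i j = G j i) (hdiag : ∀ i, G i i = 0) :
    2 • ∑ p ∈ univ.filter (fun p : ι × ι => p.1 < p.2), G p.1 p.2 = ∑ i, ∑ j, G i j := by
  have hsplit : ∀ p : ι × ι, G p.1 p.2 =
      (if p.1 < p.2 then G p.1 p.2 else 0) + (if p.2 < p.1 then G p.1 p.2 else 0) := by
    rintro ⟨i, j⟩
    rcases lt_trichotomy i j with h | rfl | h
    · simp [h, h.not_gt]
    · simp [hdiag]
    · simp [h, h.not_gt]
  have hswap : ∑ p : ι × ι, (if p.2 < p.1 then G p.1 p.2 else 0) =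
      ∑ p : ι × ι, (if p.1 < p.2 then G p.1 p.2 else 0) :=
    Fintype.sum_equiv (Equiv.prodComm ι ι) _ _ fun p => by
      rw [Equiv.prodComm_apply, Prod.fst_swap, Prod.snd_swap, hsymm p.2]
  rw [← Fintype.sum_prod_type', Fintype.sum_congr _ _ hsplit, sum_add_distrib, hswap,
    sum_filter, two_nsmul]

theorem sum_sum_sub_mul_sub {R : Type*} [CommRing R] (x z : ι → R) :
    ∑ i, ∑ j, (x i - x j) * (z i - z j) =
      2 * (Fintype.card ι * ∑ i, x i * z i - (∑ i, x i) * ∑ i, z i) := by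
  simp only [sub_mul, mul_sub, sum_sub_distrib, sum_const, card_univ, nsmul_eq_mul,
    ← mul_sum, ← sum_mul]
  ring

theorem sum_filter_lt_sub_mul_sub {R : Type*} [CommRing R] [IsDomain R] [CharZero R]
    [LinearOrder ι] (x z : ι → R) :
    ∑ p ∈ univ.filter (fun p : ι × ι => p.1 < p.2), (x p.1 - x p.2) * (z p.1 - z p.2) =
      Fintype.card ι * ∑ i, x i * z i - (∑ i, x i) * ∑ i, z i := by
  have h := two_nsmul_sum_filter_lt (fun i j => (x i - x j) * (z i - z j))
    (fun i j => by ring) (fun i => by ring)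
  rw [sum_sum_sub_mul_sub, two_nsmul, ← two_mul] at h
  exact mul_left_cancel₀ two_ne_zero h

end PairSums

section ExpMulComp

variable {E : Type*} [NormedAddCommGroup E] [NormedSpace ℝ E] (ℓ μ : E →L[ℝ] ℝ) (b : ℝ)
  {g : ℝ → ℝ}

theorem hasFDerivAt_exp_mul_comp {y : E} (hg : DifferentiableAt ℝ g (μ y + b)) :
    HasFDerivAt (fun y => exp (ℓ y) * g (μ y + b))
      ((exp (ℓ y) * g (μ y + b)) • ℓ + (exp (ℓ y) * deriv g (μ y + b)) • μ) y := by
  have hexp := (hasDerivAt_exp (ℓ y)).comp_hasFDerivAt y ℓ.hasFDerivAt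
  have hcomp := hg.hasDerivAt.comp_hasFDerivAt y (μ.hasFDerivAt.add_const b)
  refine (hexp.mul hcomp).congr_fderiv ?_
  ext v
  simp only [Function.comp_apply, add_apply, smul_apply, smul_eq_mul]
  ring

theorem fderiv_exp_mul_comp_apply (hg : Differentiable ℝ g) (y v : E) :
    fderiv ℝ (fun y => exp (ℓ y) * g (μ y + b)) y v =
      ℓ v * (exp (ℓ y) * g (μ y + b)) + μ v * (exp (ℓ y) * deriv g (μ y + b)) := by
  rw [(hasFDerivAt_exp_mul_comp ℓ μ b (hg _)).fderiv]
  simp only [add_apply, smul_apply, smul_eq_mul]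
  ring

theorem fderiv_fderiv_exp_mul_comp_apply (hg : Differentiable ℝ g)
    (hg' : Differentiable ℝ (deriv g)) (x v : E) :
    fderiv ℝ (fun y => fderiv ℝ (fun y => exp (ℓ y) * g (μ y + b)) y v) x v =
      ℓ v ^ 2 * (exp (ℓ x) * g (μ x + b)) +
        2 * ℓ v * μ v * (exp (ℓ x) * deriv g (μ x + b)) +
          μ v ^ 2 * (exp (ℓ x) * deriv (deriv g) (μ x + b)) := by
  simp_rw [fderiv_exp_mul_comp_apply ℓ μ b hg]
  have hsum := ((hasFDerivAt_exp_mul_comp ℓ μ b (y := x) (hg _)).const_mul (ℓ v)).fun_add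
    ((hasFDerivAt_exp_mul_comp ℓ μ b (y := x) (hg' _)).const_mul (μ v))
  rw [hsum.fderiv]
  simp only [smul_add, add_apply, smul_apply, smul_eq_mul]
  ring

end ExpMulComp

section WeightedSum

variable {ι : Type*} [Fintype ι]

noncomputable def weightedSum (a : ι → ℝ) : (ι → ℝ) →L[ℝ] ℝ :=
  ∑ i, a i • ContinuousLinearMap.proj i

theorem weightedSum_apply (a y : ι → ℝ) : weightedSum a y = ∑ i, a i * y i := by
  simp [weightedSum]

theorem weightedSum_single [DecidableEq ι] (a : ι → ℝ) (i : ι) :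
    weightedSum a (Pi.single i 1) = a i := by
  simp [weightedSum_apply, Pi.single_apply]

end WeightedSum

theorem mul_rpow_neg_one_div_three_pow_three {t : ℝ} (ht : 0 < t) :
    t * (t ^ (-(1 : ℝ) / 3)) ^ 3 = 1 := by
  rw [← rpow_natCast, ← rpow_mul ht.le]
  norm_num [rpow_neg_one, ht.ne']

theorem psiFun_eq_exp_mul_comp {n : ℕ} (hn : n ≠ 0) (Ai : ℝ → ℝ) (y z : Fin n → ℝ) :
    psiFun n Ai y z =
      exp (weightedSum (fun i => z i - (∑ j, z j) / n) y) *
        Ai (weightedSum (fun _ => (n : ℝ) ^ (-(1 : ℝ) / 3)) y +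
          (n : ℝ) ^ (-(1 : ℝ) / 3) * ∑ i, z i) := by
  have hexponent : ∑ i, (z i - (∑ j, z j) / n) * y i =
      (1 / n) * (n * ∑ i, y i * z i - (∑ i, y i) * ∑ i, z i) := by
    simp only [sub_mul, sum_sub_distrib, div_mul_eq_mul_div, ← sum_div, ← mul_sum,
      mul_comm (z _)]
    field_simp
  simp only [psiFun, weightedSum_apply, sum_filter_lt_sub_mul_sub, Fintype.card_fin, hexponent,
    sum_add_distrib, mul_add, mul_sum]

/-- `ψ(·,z)` is an eigenfunction of `H = ∑ ∂ᵢ² − ∑ xᵢ` with eigenvalue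
`pₙ(z) = ∑ⱼ ((zⱼ − z̄)² + zⱼ)` where `z̄ = (1/n) ∑ᵢ zᵢ`. -/
theorem psi_H_eigenfunction (n : ℕ) (hn : 1 ≤ n) (Ai : ℝ → ℝ)
    (hAi : Differentiable ℝ Ai) (hAi' : Differentiable ℝ (deriv Ai))
    (hAiry : ∀ t : ℝ, deriv (deriv Ai) t = t * Ai t) :
    ∀ x z : Fin n → ℝ,
      (∑ i, pderiv2 (fun y => psiFun n Ai y z) i x) -
          (∑ i, x i) * psiFun n Ai x z =
        (∑ j, ((z j - (∑ i, z i) / n) ^ 2 + z j)) * psiFun n Ai x z := by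
  intro x z
  have hn0 : n ≠ 0 := Nat.one_le_iff_ne_zero.mp hn
  simp only [psiFun_eq_exp_mul_comp hn0, pderiv2, fderiv_fderiv_exp_mul_comp_apply _ _ _ hAi hAi',
    weightedSum_single, hAiry]
  simp only [weightedSum_apply]
  have hmean : ∑ i, (z i - (∑ j, z j) / n) = 0 := by
    rw [sum_sub_distrib, sum_const, card_univ, Fintype.card_fin, nsmul_eq_mul]
    field_simp
    ring
  have hcube := mul_rpow_neg_one_div_three_pow_three (t := n) (Nat.cast_pos.mpr hn)
  generalize rexp _ = E
  generalize (n : ℝ) ^ (-(1 : ℝ) / 3) = c at hcube ⊢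
  simp only [← mul_sum, sum_add_distrib, ← sum_mul, sum_const, card_univ, Fintype.card_fin,
    nsmul_eq_mul]
  linear_combination (2 * c * E * deriv Ai (c * ∑ i, x i + c * ∑ i, z i)) * hmean +
    ((∑ i, x i) + ∑ i, z i) * E * Ai (c * ∑ i, x i + c * ∑ i, z i) * hcube
end
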